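/- arXiv:1409.5641 — 2 statements merged into one kernel-verified Lean document; each statement's English description precedes it below -/
import Mathlib

section
/- For any positive integer δ and any string t of length n, the sum of the exponents of all cubic runs of t whose minimal period p satisfies 2δ ≤ p ≤ 3δ is less than 3n/δ. -/
/-- `p` is a period of the substring `t[i..j]` of the 1-indexed string `t`:
`1 ≤ p ≤ |t[i..j]| = j - i + 1`, and `t[k] = t[k + p]` whenever both positions
lie in `[i..j]` (vacuously, the length is always a period). -/
def IsPeriodOf {α : Type*} (t : ℕ → α) (i j p : ℕ) : Prop :=
  1 ≤ p ∧ p ≤ j + 1 - i ∧ ∀ k, i ≤ k → k + p ≤ j → t (k + p) = t k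

/-- The minimal period of the substring `t[i..j]`. -/
noncomputable def minPeriod {α : Type*} (t : ℕ → α) (i j : ℕ) : ℕ :=
  sInf {p | IsPeriodOf t i j p}

/-- `t[i..j]` is a run of the string `t[1..n]`: its exponent is at least `2`
(i.e. `j - i + 1 ≥ 2 · minPeriod`), and the extensions `t[i-1..j]` (if `i > 1`)
and `t[i..j+1]` (if `j < n`) have strictly larger minimal periods. -/
def IsRun {α : Type*} (t : ℕ → α) (n i j : ℕ) : Prop :=
  1 ≤ i ∧ i ≤ j ∧ j ≤ n ∧
  2 * minPeriod t i j ≤ j + 1 - i ∧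
  (1 < i → minPeriod t i j < minPeriod t (i - 1) j) ∧
  (j < n → minPeriod t i j < minPeriod t i (j + 1))

/-- A cubic run is a run of exponent at least `3`. -/
def IsCubicRun {α : Type*} (t : ℕ → α) (n i j : ℕ) : Prop :=
  IsRun t n i j ∧ 3 * minPeriod t i j ≤ j + 1 - i

section PerLemmas
variable {α : Type*}

/-- `p` is a (bound-free) period of `t` on the interval `[a..b]`. -/
def Per (t : ℕ → α) (a b p : ℕ) : Prop :=
  ∀ k, a ≤ k → k + p ≤ b → t (k + p) = t k

lemma Per.restrict {t : ℕ → α} {a b c d p : ℕ} (h : Per t a b p) (hac : a ≤ c) (hdb : d ≤ b) :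
    Per t c d p := fun k hk hkp => h k (hac.trans hk) (hkp.trans hdb)

lemma Per.mul {t : ℕ → α} {a b p : ℕ} (h : Per t a b p) :
    ∀ (m k : ℕ), a ≤ k → k + m * p ≤ b → t (k + m * p) = t k := by
  intro m
  induction m with
  | zero => simp
  | succ m ih =>
    intro k hk hkb
    have e : k + (m + 1) * p = (k + m * p) + p := by ring
    rw [e] at hkb ⊢
    rw [h _ (by omega) hkb]
    exact ih k hk (by omega)

lemma Per.eq_of_modEq {t : ℕ → α} {a b p x y : ℕ} (h : Per t a b p)
    (hx : a ≤ x) (hxb : x ≤ b) (hy : a ≤ y) (hyb : y ≤ b) (hxy : x % p = y % p) :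
    t x = t y := by
  rcases Nat.eq_zero_or_pos p with hp | hp
  · subst hp; simp only [Nat.mod_zero] at hxy; rw [hxy]
  rcases le_total x y with hle | hle
  · obtain ⟨m, hm⟩ := (Nat.modEq_iff_dvd' hle).1 hxy
    rw [Nat.mul_comm] at hm
    have hym : y = x + m * p := by omega
    rw [hym]; exact (h.mul m x hx (by omega)).symm
  · obtain ⟨m, hm⟩ := (Nat.modEq_iff_dvd' hle).1 hxy.symm
    rw [Nat.mul_comm] at hm
    have hxm : x = y + m * p := by omega
    rw [hxm]; exact h.mul m y hy (by omega)

lemma fine_wilf {t : ℕ → α} :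
    ∀ (s : ℕ) {a b p q : ℕ}, p + q ≤ s → 1 ≤ p → 1 ≤ q →
      Per t a b p → Per t a b q → p + q ≤ b + 1 - a → Per t a b (Nat.gcd p q) := by
  intro s
  induction s with
  | zero => intro a b p q hs hp hq _ _ _; omega
  | succ s ih =>
    intro a b p q hs hp hq hP hQ hlen
    rcases lt_trichotomy p q with h | h | h
    · have hQP : Per t a b (q - p) := by
        intro k hk hkb
        by_cases hkq : k + q ≤ b
        · calc t (k + (q - p)) = t (k + (q - p) + p) := (hP (k + (q - p)) (by omega) (by omega)).symm
            _ = t (k + q) := by rw [show k + (q - p) + p = k + q by omega]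
            _ = t k := hQ k hk hkq
        · have hka : a + p ≤ k := by omega
          calc t (k + (q - p)) = t ((k - p) + q) := by rw [show k + (q - p) = (k - p) + q by omega]
            _ = t (k - p) := hQ (k - p) (by omega) (by omega)
            _ = t k := by
                have h2 := hP (k - p) (by omega) (by omega)
                rw [show k - p + p = k by omega] at h2
                exact h2.symm
      have hres := ih (p := p) (q := q - p) (by omega) hp (by omega) hP hQP (by omega)
      rwa [Nat.gcd_sub_self_right h.le] at hres
    · rw [h, Nat.gcd_self]; exact hQ
    · have hPQ : Per t a b (p - q) := by
        intro k hk hkb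
        by_cases hkq : k + p ≤ b
        · calc t (k + (p - q)) = t (k + (p - q) + q) := (hQ (k + (p - q)) (by omega) (by omega)).symm
            _ = t (k + p) := by rw [show k + (p - q) + q = k + p by omega]
            _ = t k := hP k hk hkq
        · have hka : a + q ≤ k := by omega
          calc t (k + (p - q)) = t ((k - q) + p) := by rw [show k + (p - q) = (k - q) + p by omega]
            _ = t (k - q) := hP (k - q) (by omega) (by omega)
            _ = t k := by
                have h2 := hQ (k - q) (by omega) (by omega)
                rw [show k - q + q = k by omega] at h2
                exact h2.symm
      have hres := ih (p := p - q) (q := q) (by omega) (by omega) hq hPQ hQ (by omega)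
      rwa [Nat.gcd_comm, Nat.gcd_sub_self_right h.le, Nat.gcd_comm] at hres

lemma Per.propagate {t : ℕ → α} {a b c d p g : ℕ} (hP : Per t a b p)
    (hac : a ≤ c) (hdb : d ≤ b) (hg : Per t c d g) (hg1 : 1 ≤ g) (hgp : g ≤ p)
    (hlen : p + g ≤ d + 1 - c) : Per t a b g := by
  intro k hk hkb
  have hp1 : 1 ≤ p := le_trans hg1 hgp
  set r := (k + p * (c + 1) - c) % p with hr
  have hrlt : r < p := Nat.mod_lt _ (by omega)
  set k' := c + r with hk'
  have hmod : k % p = k' % p := by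
    have h1 : (k + p * (c + 1)) % p = k % p := Nat.add_mul_mod_self_left k p (c + 1)
    have h2 := Nat.div_add_mod (k + p * (c + 1) - c) p
    have hge : c ≤ k + p * (c + 1) := by nlinarith
    have h3 : k + p * (c + 1) = k' + p * ((k + p * (c + 1) - c) / p) := by omega
    have h4 : (k' + p * ((k + p * (c + 1) - c) / p)) % p = k' % p :=
      Nat.add_mul_mod_self_left k' p _
    rw [← h1, h3, h4]
  have hk'd : k' + g ≤ d := by omega
  have h5 : t k = t k' := hP.eq_of_modEq hk (by omega) (by omega) (by omega) hmod
  have h6 : t (k + g) = t (k' + g) := by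
    apply hP.eq_of_modEq (by omega) (by omega) (by omega) (by omega)
    exact Nat.ModEq.add_right g hmod
  exact h6.trans ((hg k' (by omega) hk'd).trans h5.symm)

end PerLemmas
section RunLemmas
variable {α : Type*}

lemma Per.union {t : ℕ → α} {a b c d p : ℕ} (h1 : Per t a b p) (h2 : Per t c d p)
    (hac : a ≤ c) (hcb : c + p ≤ b + 1) : Per t a (max b d) p := by
  intro k hk hkb
  by_cases hb : k + p ≤ b
  · exact h1 k hk hb
  · have hd : k + p ≤ d := by omega
    exact h2 k (by omega) hd

lemma isPeriodOf_full (t : ℕ → α) {i j : ℕ} (h : i ≤ j) : IsPeriodOf t i j (j + 1 - i) :=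
  ⟨by omega, le_rfl, fun k hk hkp => absurd hkp (by omega)⟩

lemma minPeriod_isPeriod (t : ℕ → α) {i j : ℕ} (h : i ≤ j) :
    IsPeriodOf t i j (minPeriod t i j) :=
  Nat.sInf_mem (⟨j + 1 - i, isPeriodOf_full t h⟩ : {p | IsPeriodOf t i j p}.Nonempty)

lemma minPeriod_le {t : ℕ → α} {i j p : ℕ} (hp : IsPeriodOf t i j p) :
    minPeriod t i j ≤ p := Nat.sInf_le hp

lemma minPeriod_per (t : ℕ → α) {i j : ℕ} (h : i ≤ j) :
    Per t i j (minPeriod t i j) := (minPeriod_isPeriod t h).2.2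

lemma minPeriod_dvd {t : ℕ → α} {i j c d q : ℕ} (hij : i ≤ j) (hic : i ≤ c) (hdj : d ≤ j)
    (hq : Per t c d q) (hq1 : 1 ≤ q) (hlen : minPeriod t i j + q ≤ d + 1 - c) :
    minPeriod t i j ∣ q := by
  have hmem := minPeriod_isPeriod t hij
  set p := minPeriod t i j with hpdef
  have hp1 : 1 ≤ p := hmem.1
  have hP : Per t i j p := hmem.2.2
  have hPw : Per t c d p := hP.restrict hic hdj
  have hgper : Per t c d (Nat.gcd p q) := fine_wilf (p + q) le_rfl hp1 hq1 hPw hq hlen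
  have hgcd1 : 1 ≤ Nat.gcd p q := Nat.gcd_pos_of_pos_left q hp1
  have hgp : Nat.gcd p q ≤ p := Nat.le_of_dvd hp1 (Nat.gcd_dvd_left p q)
  have hgq : Nat.gcd p q ≤ q := Nat.le_of_dvd hq1 (Nat.gcd_dvd_right p q)
  have hprop : Per t i j (Nat.gcd p q) := hP.propagate hic hdj hgper hgcd1 hgp (by omega)
  have hmp : IsPeriodOf t i j (Nat.gcd p q) := ⟨hgcd1, le_trans hgp hmem.2.1, hprop⟩
  have hle := minPeriod_le hmp
  have heq : Nat.gcd p q = p := le_antisymm hgp (hpdef ▸ hle)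
  exact heq ▸ Nat.gcd_dvd_right p q

/-- Two cubic runs with minimal periods in `[2δ, 3δ]` overlapping in at least
`p₁ + p₂` positions must coincide. -/
lemma run_eq_of_overlap {t : ℕ → α} {n δ : ℕ} {x y : ℕ × ℕ}
    (hx : IsCubicRun t n x.1 x.2 ∧ 2 * δ ≤ minPeriod t x.1 x.2 ∧ minPeriod t x.1 x.2 ≤ 3 * δ)
    (hy : IsCubicRun t n y.1 y.2 ∧ 2 * δ ≤ minPeriod t y.1 y.2 ∧ minPeriod t y.1 y.2 ≤ 3 * δ)
    (hov : max x.1 y.1 + minPeriod t x.1 x.2 + minPeriod t y.1 y.2 ≤ min x.2 y.2 + 1) :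
    x = y := by
  obtain ⟨⟨⟨hx1, hxij, hxn, hx2p, hxl, hxr⟩, hx3p⟩, hxlo, hxhi⟩ := hx
  obtain ⟨⟨⟨hy1, hyij, hyn, hy2p, hyl, hyr⟩, hy3p⟩, hylo, hyhi⟩ := hy
  set p1 := minPeriod t x.1 x.2 with hp1def
  set p2 := minPeriod t y.1 y.2 with hp2def
  have hp1pos : 1 ≤ p1 := (minPeriod_isPeriod t hxij).1
  have hp2pos : 1 ≤ p2 := (minPeriod_isPeriod t hyij).1
  have hperx : Per t x.1 x.2 p1 := minPeriod_per t hxij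
  have hpery : Per t y.1 y.2 p2 := minPeriod_per t hyij
  -- the overlap window
  have hd12 : p1 ∣ p2 :=
    minPeriod_dvd hxij (le_max_left _ _) (min_le_left _ _)
      (hpery.restrict (le_max_right _ _) (min_le_right _ _)) hp2pos (by omega)
  have hd21 : p2 ∣ p1 :=
    minPeriod_dvd hyij (le_max_right _ _) (min_le_right _ _)
      (hperx.restrict (le_max_left _ _) (min_le_left _ _)) hp1pos (by omega)
  have hpeq : p1 = p2 := Nat.dvd_antisymm hd12 hd21
  -- union has period p1
  have hpery1 : Per t y.1 y.2 p1 := by rw [hpeq]; exact hpery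
  have hU : Per t (min x.1 y.1) (max x.2 y.2) p1 := by
    rcases le_total x.1 y.1 with h | h
    · rw [min_eq_left h]
      exact hperx.union hpery1 h (by omega)
    · rw [min_eq_right h, max_comm]
      exact hpery1.union hperx h (by omega)
  -- equal right endpoints
  have hj : x.2 = y.2 := by
    by_contra hne
    rcases lt_or_gt_of_ne hne with h | h
    · have hlt := hxr (lt_of_lt_of_le h hyn)
      have hper : Per t x.1 (x.2 + 1) p1 :=
        hU.restrict (min_le_left _ _) (by omega)
      have : minPeriod t x.1 (x.2 + 1) ≤ p1 :=
        minPeriod_le ⟨hp1pos, by omega, hper⟩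
      omega
    · have hlt := hyr (lt_of_lt_of_le h hxn)
      have hper : Per t y.1 (y.2 + 1) p2 := by
        rw [← hpeq]; exact hU.restrict (min_le_right _ _) (by omega)
      have : minPeriod t y.1 (y.2 + 1) ≤ p2 :=
        minPeriod_le ⟨hp2pos, by omega, hper⟩
      omega
  -- equal left endpoints
  have hi : x.1 = y.1 := by
    by_contra hne
    rcases lt_or_gt_of_ne hne with h | h
    · have hlt := hyl (by omega)
      have hper : Per t (y.1 - 1) y.2 p2 := by
        rw [← hpeq]; exact hU.restrict (by omega) (le_max_right _ _)
      have : minPeriod t (y.1 - 1) y.2 ≤ p2 :=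
        minPeriod_le ⟨hp2pos, by omega, hper⟩
      omega
    · have hlt := hxl (by omega)
      have hper : Per t (x.1 - 1) x.2 p1 :=
        hU.restrict (by omega) (le_max_left _ _)
      have : minPeriod t (x.1 - 1) x.2 ≤ p1 :=
        minPeriod_le ⟨hp1pos, by omega, hper⟩
      omega
  exact Prod.ext hi hj

end RunLemmas
section Count
variable {α : Type*}

lemma run_gap {t : ℕ → α} {n δ : ℕ} {x y : ℕ × ℕ}
    (hx : IsCubicRun t n x.1 x.2 ∧ 2 * δ ≤ minPeriod t x.1 x.2 ∧ minPeriod t x.1 x.2 ≤ 3 * δ)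
    (hy : IsCubicRun t n y.1 y.2 ∧ 2 * δ ≤ minPeriod t y.1 y.2 ∧ minPeriod t y.1 y.2 ≤ 3 * δ)
    (hne : x ≠ y) :
    min x.2 y.2 + 1 < max x.1 y.1 + minPeriod t x.1 x.2 + minPeriod t y.1 y.2 := by
  by_contra h
  exact hne (run_eq_of_overlap hx hy (by omega))

lemma run_fst_ne {t : ℕ → α} {n δ : ℕ} {x y : ℕ × ℕ}
    (hx : IsCubicRun t n x.1 x.2 ∧ 2 * δ ≤ minPeriod t x.1 x.2 ∧ minPeriod t x.1 x.2 ≤ 3 * δ)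
    (hy : IsCubicRun t n y.1 y.2 ∧ 2 * δ ≤ minPeriod t y.1 y.2 ∧ minPeriod t y.1 y.2 ≤ 3 * δ)
    (hne : x ≠ y) : x.1 ≠ y.1 := by
  have hg := run_gap hx hy hne
  obtain ⟨⟨⟨hx1, hxij, hxn, hx2p, _, _⟩, hx3p⟩, hxlo, hxhi⟩ := hx
  obtain ⟨⟨⟨hy1, hyij, hyn, hy2p, _, _⟩, hy3p⟩, hylo, hyhi⟩ := hy
  omega

lemma run_gap_bound {t : ℕ → α} {n δ : ℕ} {x y : ℕ × ℕ}
    (hx : IsCubicRun t n x.1 x.2 ∧ 2 * δ ≤ minPeriod t x.1 x.2 ∧ minPeriod t x.1 x.2 ≤ 3 * δ)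
    (hy : IsCubicRun t n y.1 y.2 ∧ 2 * δ ≤ minPeriod t y.1 y.2 ∧ minPeriod t y.1 y.2 ≤ 3 * δ)
    (hne : x ≠ y) (hlt : x.1 < y.1) : x.2 + 1 - x.1 ≤ 6 * (y.1 - x.1) := by
  have hg := run_gap hx hy hne
  obtain ⟨⟨⟨hx1, hxij, hxn, hx2p, _, _⟩, hx3p⟩, hxlo, hxhi⟩ := hx
  obtain ⟨⟨⟨hy1, hyij, hyn, hy2p, _, _⟩, hy3p⟩, hylo, hyhi⟩ := hy
  omega

lemma key_bound {t : ℕ → α} {n δ : ℕ} (hδ : 0 < δ) :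
    ∀ T : Finset (ℕ × ℕ),
      (∀ x ∈ T, IsCubicRun t n x.1 x.2 ∧ 2 * δ ≤ minPeriod t x.1 x.2 ∧
        minPeriod t x.1 x.2 ≤ 3 * δ) → T.Nonempty →
      ∃ m ∈ T, ∑ ij ∈ T, (δ : ℝ) * (((ij.2 + 1 - ij.1 : ℕ) : ℝ) / (minPeriod t ij.1 ij.2 : ℝ))
          ≤ 3 * ((m.1 : ℝ) - 1) + ((m.2 + 1 - m.1 : ℕ) : ℝ) / 2 := by
  intro T
  induction T using Finset.strongInduction with
  | _ T ih =>
    intro hQ hne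
    obtain ⟨m, hmT, hmax⟩ := T.exists_max_image Prod.fst hne
    refine ⟨m, hmT, ?_⟩
    have hQm := hQ m hmT
    have hmij : m.1 ≤ m.2 := hQm.1.1.2.1
    have hm1 : 1 ≤ m.1 := hQm.1.1.1
    have hp1 : 1 ≤ minPeriod t m.1 m.2 := (minPeriod_isPeriod t hmij).1
    have hterm : (δ : ℝ) * (((m.2 + 1 - m.1 : ℕ) : ℝ) / (minPeriod t m.1 m.2 : ℝ))
        ≤ ((m.2 + 1 - m.1 : ℕ) : ℝ) / 2 := by
      rw [mul_div_assoc', div_le_div_iff₀ (by exact_mod_cast Nat.lt_of_lt_of_le Nat.zero_lt_one hp1) (by norm_num)]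
      have h2 : ((2 * δ : ℕ) : ℝ) ≤ (minPeriod t m.1 m.2 : ℝ) := Nat.cast_le.2 hQm.2.1
      have hL0 : (0 : ℝ) ≤ ((m.2 + 1 - m.1 : ℕ) : ℝ) := Nat.cast_nonneg _
      push_cast at h2
      nlinarith
    rw [← Finset.add_sum_erase T _ hmT]
    rcases (T.erase m).eq_empty_or_nonempty with he | hne'
    · rw [he, Finset.sum_empty, add_zero]
      have h1 : (1 : ℝ) ≤ (m.1 : ℝ) := by exact_mod_cast hm1
      linarith
    · obtain ⟨m', hm'e, hsum⟩ := ih (T.erase m) (Finset.erase_ssubset hmT)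
        (fun x hx => hQ x (Finset.mem_of_mem_erase hx)) hne'
      have hm'T : m' ∈ T := Finset.mem_of_mem_erase hm'e
      have hm'ne : m' ≠ m := Finset.ne_of_mem_erase hm'e
      have hfne : m'.1 ≠ m.1 := run_fst_ne (hQ m' hm'T) hQm hm'ne
      have hlt : m'.1 < m.1 := lt_of_le_of_ne (hmax m' hm'T) hfne
      have hgap := run_gap_bound (hQ m' hm'T) hQm hm'ne hlt
      have hcast : ((m'.2 + 1 - m'.1 : ℕ) : ℝ) ≤ 6 * ((m.1 : ℝ) - (m'.1 : ℝ)) := by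
        calc ((m'.2 + 1 - m'.1 : ℕ) : ℝ) ≤ ((6 * (m.1 - m'.1) : ℕ) : ℝ) := Nat.cast_le.2 hgap
          _ = 6 * ((m.1 : ℝ) - (m'.1 : ℝ)) := by
              rw [Nat.cast_mul, Nat.cast_sub hlt.le]; norm_num
      linarith

end Count

/-- For any positive `δ` and any string of length `n ≥ 1`, the sum of the
exponents of all cubic runs with minimal period in `[2δ, 3δ]` is less than
`3n/δ`. -/
theorem sum_of_exponents_of_cubic_runs_period_between {α : Type*} [LinearOrder α]
    (δ n : ℕ) (hδ : 0 < δ) (hn : 0 < n) (t : ℕ → α) :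
    (∑ᶠ ij ∈ {ij : ℕ × ℕ | IsCubicRun t n ij.1 ij.2 ∧
          2 * δ ≤ minPeriod t ij.1 ij.2 ∧ minPeriod t ij.1 ij.2 ≤ 3 * δ},
        ((ij.2 + 1 - ij.1 : ℕ) : ℝ) / (minPeriod t ij.1 ij.2 : ℝ))
      < 3 * n / δ := by
  classical
  set S : Set (ℕ × ℕ) := {ij : ℕ × ℕ | IsCubicRun t n ij.1 ij.2 ∧
      2 * δ ≤ minPeriod t ij.1 ij.2 ∧ minPeriod t ij.1 ij.2 ≤ 3 * δ} with hSdef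
  have hsub : S ⊆ Set.Icc 1 n ×ˢ Set.Icc 1 n := by
    rintro ⟨i, j⟩ ⟨⟨⟨h1, h2, h3, _⟩, _⟩, _⟩
    exact ⟨⟨h1, h2.trans h3⟩, ⟨h1.trans h2, h3⟩⟩
  have hfin : S.Finite := ((Set.finite_Icc 1 n).prod (Set.finite_Icc 1 n)).subset hsub
  rw [finsum_mem_eq_finite_toFinset_sum _ hfin]
  have hmem : ∀ x ∈ hfin.toFinset, IsCubicRun t n x.1 x.2 ∧
      2 * δ ≤ minPeriod t x.1 x.2 ∧ minPeriod t x.1 x.2 ≤ 3 * δ :=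
    fun x hx => hfin.mem_toFinset.1 hx
  have hδR : (0 : ℝ) < (δ : ℝ) := by exact_mod_cast hδ
  have hpos : (0 : ℝ) < 3 * (n : ℝ) / (δ : ℝ) := by
    apply div_pos _ hδR
    have : (0 : ℝ) < (n : ℝ) := by exact_mod_cast hn
    linarith
  rcases hfin.toFinset.eq_empty_or_nonempty with he | hne
  · rw [he, Finset.sum_empty]; exact hpos
  · obtain ⟨m, hmF, hkey⟩ := key_bound hδ hfin.toFinset hmem hne
    have hQm := hmem m hmF
    have hmij : m.1 ≤ m.2 := hQm.1.1.2.1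
    have hmn : m.2 ≤ n := hQm.1.1.2.2.1
    have hmul : (δ : ℝ) * ∑ ij ∈ hfin.toFinset,
        ((ij.2 + 1 - ij.1 : ℕ) : ℝ) / (minPeriod t ij.1 ij.2 : ℝ)
        ≤ 3 * ((m.1 : ℝ) - 1) + ((m.2 + 1 - m.1 : ℕ) : ℝ) / 2 := by
      rw [Finset.mul_sum]; exact hkey
    have hLcast : ((m.2 + 1 - m.1 : ℕ) : ℝ) = (m.2 : ℝ) + 1 - (m.1 : ℝ) := by
      rw [Nat.cast_sub (by omega)]; push_cast; ring
    have hfinal : 3 * ((m.1 : ℝ) - 1) + ((m.2 + 1 - m.1 : ℕ) : ℝ) / 2 < 3 * (n : ℝ) := by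
      rw [hLcast]
      have c1 : (m.1 : ℝ) ≤ (m.2 : ℝ) := by exact_mod_cast hmij
      have c2 : (m.2 : ℝ) ≤ (n : ℝ) := by exact_mod_cast hmn
      linarith
    rw [lt_div_iff₀ hδR]
    have := lt_of_le_of_lt hmul hfinal
    linarith
end

section
/- Let k ≥ 1 and let w = (01)^k(10)^k be the binary string of length 4k over the ordered alphabet {0,1} (so w[2m−1] = 0 and w[2m] = 1 for 1 ≤ m ≤ k, and w[2k+2m−1] = 1 and w[2k+2m] = 0 for 1 ≤ m ≤ k). Then for every integer i with 0 ≤ i ≤ k−1, the substring w[2k−2i..2k+2i+1], which equals 1(01)^i(10)^i1, is a run of w with minimal period 2i+1. -/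
/-- The string `(01)^k (10)^k` of length `4k` over the ordered alphabet
`{0, 1} ⊆ ℕ`, indexed from `1`: positions `1..2k` alternate `0,1,0,1,…` and
positions `2k+1..4k` alternate `1,0,1,0,…`. -/
def zeroOneWord (k : ℕ) : ℕ → ℕ := fun m =>
  if m ≤ 2 * k then (if m % 2 = 1 then 0 else 1)
  else (if m % 2 = 1 then 1 else 0)

lemma trivial_period {α : Type*} (t : ℕ → α) (i j : ℕ) (h : i ≤ j) :
    IsPeriodOf t i j (j + 1 - i) :=
  ⟨by omega, le_rfl, fun m hm hmp => absurd hmp (by omega)⟩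

lemma word_period (k i : ℕ) (hk : i + 1 ≤ k) :
    IsPeriodOf (zeroOneWord k) (2 * k - 2 * i) (2 * k + 2 * i + 1) (2 * i + 1) := by
  refine ⟨by omega, by omega, fun m hm hmb => ?_⟩
  unfold zeroOneWord
  split_ifs <;> omega

lemma period_lb (k i : ℕ) (hk : i + 1 ≤ k) (p : ℕ)
    (hp : IsPeriodOf (zeroOneWord k) (2 * k - 2 * i) (2 * k + 2 * i + 1) p) :
    2 * i + 1 ≤ p := by
  by_contra h
  push_neg at h
  obtain ⟨hp1, hp2, hp3⟩ := hp
  rcases Nat.mod_two_eq_zero_or_one p with he | ho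
  · have h2 := hp3 (2 * k) (by omega) (by omega)
    unfold zeroOneWord at h2
    split_ifs at h2 <;> omega
  · have h2 := hp3 (2 * k - p) (by omega) (by omega)
    unfold zeroOneWord at h2
    split_ifs at h2 <;> omega

lemma period_lb_left (k i : ℕ) (hk : i + 1 ≤ k) (p : ℕ)
    (hp : IsPeriodOf (zeroOneWord k) (2 * k - 2 * i - 1) (2 * k + 2 * i + 1) p) :
    2 * i + 2 ≤ p := by
  by_contra h
  push_neg at h
  obtain ⟨hp1, hp2, hp3⟩ := hp
  rcases Nat.mod_two_eq_zero_or_one p with he | ho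
  · have h2 := hp3 (2 * k) (by omega) (by omega)
    unfold zeroOneWord at h2
    split_ifs at h2 <;> omega
  · have h2 := hp3 (2 * k - p) (by omega) (by omega)
    unfold zeroOneWord at h2
    split_ifs at h2 <;> omega

lemma period_lb_right (k i : ℕ) (hk : i + 1 ≤ k) (p : ℕ)
    (hp : IsPeriodOf (zeroOneWord k) (2 * k - 2 * i) (2 * k + 2 * i + 1 + 1) p) :
    2 * i + 2 ≤ p := by
  by_contra h
  push_neg at h
  obtain ⟨hp1, hp2, hp3⟩ := hp
  rcases Nat.mod_two_eq_zero_or_one p with he | ho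
  · have h2 := hp3 (2 * k) (by omega) (by omega)
    unfold zeroOneWord at h2
    split_ifs at h2 <;> omega
  · have h2 := hp3 (2 * k + 1) (by omega) (by omega)
    unfold zeroOneWord at h2
    split_ifs at h2 <;> omega

lemma minPeriod_word (k i : ℕ) (hk : i + 1 ≤ k) :
    minPeriod (zeroOneWord k) (2 * k - 2 * i) (2 * k + 2 * i + 1) = 2 * i + 1 := by
  have hmem := word_period k i hk
  refine le_antisymm (Nat.sInf_le hmem) (le_csInf ⟨_, hmem⟩ fun p hp => period_lb k i hk p hp)

/-- In `w = (01)^k (10)^k`, for every `0 ≤ i ≤ k - 1` the substring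
`w[2k-2i..2k+2i+1] = 1(01)^i(10)^i 1` is a run of `w` with minimal period
`2i + 1`. -/
theorem zeroOneWord_runs (k : ℕ) (hk : 1 ≤ k) (i : ℕ) (hi : i ≤ k - 1) :
    IsRun (zeroOneWord k) (4 * k) (2 * k - 2 * i) (2 * k + 2 * i + 1) ∧
    minPeriod (zeroOneWord k) (2 * k - 2 * i) (2 * k + 2 * i + 1) = 2 * i + 1 := by
  have hk' : i + 1 ≤ k := by omega
  have hmp := minPeriod_word k i hk'
  refine ⟨⟨by omega, by omega, by omega, by rw [hmp]; omega, ?_, ?_⟩, hmp⟩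
  · intro _
    rw [hmp]
    have hne : {p | IsPeriodOf (zeroOneWord k) (2 * k - 2 * i - 1) (2 * k + 2 * i + 1) p}.Nonempty :=
      ⟨_, trivial_period _ _ _ (by omega)⟩
    have := period_lb_left k i hk' _ (Nat.sInf_mem hne)
    unfold minPeriod
    omega
  · intro _
    rw [hmp]
    have hne : {p | IsPeriodOf (zeroOneWord k) (2 * k - 2 * i) (2 * k + 2 * i + 1 + 1) p}.Nonempty :=
      ⟨_, trivial_period _ _ _ (by omega)⟩
    have := period_lb_right k i hk' _ (Nat.sInf_mem hne)
    unfold minPeriod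
    omega
end
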